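/- arXiv:2301.04079 — 4 statements merged into one kernel-verified Lean document; each statement's English description precedes it below -/
import Mathlib

section
/- Let C be an abelian category. C satisfies the minimal cover axiom if, and only if, every morphism f : X → Y in C admits a minimal projective factorization, i.e., a factorization f = p ∘ c where c is a monomorphism whose cokernel is a projective object, p is an epimorphism, and the factorization is minimal in the sense that every endomorphism φ of the middle object with φ ∘ c = c and p ∘ φ = p is an isomorphism. -/
open CategoryTheory CategoryTheory.Limits

universe v u

/-- `p : P ⟶ X` is a minimal projective cover: `P` is projective, `p` is an epimorphism, and
every endomorphism `φ : P ⟶ P` with `p ∘ φ = p` is an isomorphism. -/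
def IsMinimalProjectiveCover {C : Type u} [Category.{v} C] {P X : C} (p : P ⟶ X) : Prop :=
  Projective P ∧ Epi p ∧ ∀ φ : P ⟶ P, φ ≫ p = p → IsIso φ

/-- A category satisfies the minimal cover axiom if every object admits a minimal
projective cover. -/
def HasMinimalCovers (C : Type u) [Category.{v} C] : Prop :=
  ∀ X : C, ∃ (P : C) (p : P ⟶ X), IsMinimalProjectiveCover p

/-- An abelian category satisfies the minimal cover axiom if, and only if,
every morphism `f : X ⟶ Y` admits a minimal projective factorization `f = p ∘ c`, where `c` is
a monomorphism with projective cokernel, `p` is an epimorphism, and every endomorphism `φ` of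
the middle object with `φ ∘ c = c` and `p ∘ φ = p` is an isomorphism. -/
theorem minimal_cover_axiom_iff_minimal_projective_factorization_axiom
    (C : Type u) [Category.{v} C] [Abelian C] :
    HasMinimalCovers C ↔
      ∀ (X Y : C) (f : X ⟶ Y),
        ∃ (W : C) (c : X ⟶ W) (p : W ⟶ Y),
          c ≫ p = f ∧ Mono c ∧ Projective (cokernel c) ∧ Epi p ∧
            ∀ φ : W ⟶ W, c ≫ φ = c → φ ≫ p = p → IsIso φ := by
  constructor
  · intro hmc X Y f
    obtain ⟨P, π, hP, hπepi, hπmin⟩ := hmc (cokernel f)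
    haveI := hP
    haveI := hπepi
    set q : Y ⟶ cokernel f := cokernel.π f with hq
    let g : P ⟶ Y := Projective.factorThru π q
    have hgq : g ≫ q = π := Projective.factorThru_comp π q
    refine ⟨X ⊞ P, biprod.inl, biprod.desc f g, by simp, inferInstance,
      Projective.of_iso (cokernelBiprodInlIso (X := X) (Y := P)).symm hP, ?_, ?_⟩
    · -- epi
      refine Preadditive.epi_of_cancel_zero _ ?_
      intro Z h hh
      have hf : f ≫ h = 0 := by
        have := biprod.inl ≫= hh
        simpa using this
      have hg : g ≫ h = 0 := by
        have := biprod.inr ≫= hh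
        simpa using this
      have hfac : h = q ≫ cokernel.desc f h hf := by simp [hq]
      have : π ≫ cokernel.desc f h hf = 0 := by
        rw [← hgq, Category.assoc, ← hfac, hg]
      have hd0 : cokernel.desc f h hf = 0 := by
        rwa [← cancel_epi π, comp_zero]
      rw [hfac, hd0, comp_zero]
    · intro φ hcφ hφp
      set a : P ⟶ X := biprod.inr ≫ φ ≫ biprod.fst with ha
      set d : P ⟶ P := biprod.inr ≫ φ ≫ biprod.snd with hd
      have hφ : φ = biprod.desc biprod.inl (biprod.lift a d) := by
        apply biprod.hom_ext' <;> apply biprod.hom_ext <;>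
          simp [ha, hd, reassoc_of% hcφ, hcφ]
      have h2 : a ≫ f + d ≫ g = g := by
        have key : biprod.inr ≫ φ ≫ biprod.desc f g = g := by
          rw [hφp]; simp
        rw [ha, hd]
        rw [biprod.desc_eq] at key
        simpa [Preadditive.comp_add] using key
      have hdπ : d ≫ π = π := by
        calc d ≫ π = d ≫ g ≫ q := by rw [hgq]
          _ = (a ≫ f + d ≫ g) ≫ q := by
              simp [Preadditive.add_comp, Category.assoc, hq, cokernel.condition_assoc]
          _ = g ≫ q := by rw [h2]
          _ = π := hgq
      haveI hdiso : IsIso d := hπmin d hdπ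
      refine ⟨biprod.desc biprod.inl (biprod.lift (-(inv d ≫ a)) (inv d)), ?_, ?_⟩
      · rw [hφ]
        apply biprod.hom_ext' <;>
          apply biprod.hom_ext <;>
          simp [biprod.lift_desc, Preadditive.add_comp, Preadditive.comp_add]
      · rw [hφ]
        apply biprod.hom_ext' <;>
          apply biprod.hom_ext <;>
          simp [biprod.lift_desc, Preadditive.add_comp, Preadditive.comp_add]
  · intro h X
    open ZeroObject in
    obtain ⟨W, c, p, _, _, hproj, hepi, hmin⟩ := h 0 X 0
    have hc0 : c = 0 := by
      apply (isZero_zero C).eq_of_src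
    refine ⟨W, p, ?_, hepi, fun φ hφ => hmin φ (by simp [hc0]) hφ⟩
    exact Projective.of_iso (by rw [hc0]; exact cokernelZeroIsoTarget) hproj
end

section
/- Let C be an abelian category satisfying the minimal cover axiom. If an object X of C is indecomposable, then its minimal projective resolution, regarded as an object of the category Ch(C) of non-negative chain complexes in C, is indecomposable. -/
open CategoryTheory CategoryTheory.Limits

universe v u

/-- A projective resolution is minimal if every endomorphism of the resolving complex
commuting with the augmentation map is an isomorphism. -/
def CategoryTheory.ProjectiveResolution.IsMinimal {C : Type u} [Category.{v} C]
    [HasZeroObject C] [HasZeroMorphisms C] {X : C} (R : ProjectiveResolution X) : Prop :=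
  ∀ φ : R.complex ⟶ R.complex, φ ≫ R.π = R.π → IsIso φ

/-- Right minimality in the sense of Auslander–Reiten; `R.IsMinimal` says that `R.π` is right
minimal. -/
def IsRightMinimal {C : Type u} [Category.{v} C] {P Y : C} (π : P ⟶ Y) : Prop :=
  ∀ φ : P ⟶ P, φ ≫ π = π → IsIso φ

/-- The projection onto `A` is an idempotent fixing `π`, hence invertible, hence the identity. -/
lemma IsRightMinimal.isZero_of_inr_comp_eq_zero {C : Type u} [Category.{v} C] [Preadditive C]
    [HasBinaryBiproducts C] {P Y A B : C} {π : P ⟶ Y} (hπ : IsRightMinimal π)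
    (f : P ≅ A ⊞ B) (h : biprod.inr ≫ f.inv ≫ π = 0) : IsZero B := by
  set e : P ⟶ P := f.hom ≫ biprod.fst ≫ biprod.inl ≫ f.inv
  have he_comp : e ≫ π = π := by
    have hproj : biprod.fst ≫ biprod.inl ≫ f.inv ≫ π = f.inv ≫ π := by
      ext
      · simp
      · simpa using h.symm
    simp only [e, Category.assoc, hproj, Iso.hom_inv_id_assoc]
  have : IsIso e := hπ e he_comp
  have he_id : e = 𝟙 P := by
    rw [← cancel_epi e, Category.comp_id]
    simp [e]
  rw [IsZero.iff_id_eq_zero]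
  calc 𝟙 B = biprod.inr ≫ f.inv ≫ e ≫ f.hom ≫ biprod.snd := by simp [he_id]
    _ = 0 := by simp [e]

lemma ChainComplex.eq_zero_of_isZero_homology_zero {C : Type u} [Category.{v} C] [Abelian C]
    {B : ChainComplex C ℕ} (hB : IsZero (B.homology 0)) {X : C}
    (ψ : B ⟶ (ChainComplex.single₀ C).obj X) : ψ = 0 := by
  have : Epi (B.d 1 0) := by
    have hexact := (B.exactAt_iff' 1 0 0 (by simp) (by simp)).1
      ((B.exactAt_iff_isZero_homology 0).2 hB)
    exact (ShortComplex.exact_iff_epi _ (by simp; rfl)).1 hexact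
  ext
  rw [← cancel_epi (B.d 1 0), HomologicalComplex.zero_f, comp_zero]
  simpa using (ψ.comm 1 0).symm.trans comp_zero

/-- `H₀` takes a decomposition of the resolution to a decomposition of `X`; a summand with
vanishing `H₀` is killed by the augmentation, hence is zero by minimality. -/
theorem indecomposable_minimal_projective_resolution_of_indecomposable_general
    (C : Type u) [Category.{v} C] [Abelian C]
    (X : C) (hX : Indecomposable X)
    (R : ProjectiveResolution X) (hR : R.IsMinimal) :
    Indecomposable R.complex := by
  let H₀ := HomologicalComplex.homologyFunctor C (ComplexShape.down ℕ) 0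
  let e : H₀.obj R.complex ≅ X := isoOfQuasiIsoAt R.π 0 ≪≫
    HomologicalComplex.singleObjHomologySelfIso (ComplexShape.down ℕ) 0 X
  have hR' : IsRightMinimal R.π := hR
  refine ⟨fun h ↦ hX.1 ((H₀.map_isZero h).of_iso e.symm), fun Y Z f ↦ ?_⟩
  have : PreservesBinaryBiproducts H₀ := preservesBinaryBiproducts_of_preservesBiproducts H₀
  rcases hX.2 _ _ (e.symm ≪≫ H₀.mapIso f ≪≫ H₀.mapBiprod Y Z) with hY | hZ
  · exact Or.inl (hR'.isZero_of_inr_comp_eq_zero (f ≪≫ biprod.braiding Y Z)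
      (ChainComplex.eq_zero_of_isZero_homology_zero hY _))
  · exact Or.inr (hR'.isZero_of_inr_comp_eq_zero f
      (ChainComplex.eq_zero_of_isZero_homology_zero hZ _))

/-- Let `C` be an abelian category satisfying the minimal cover axiom.
If an object `X` of `C` is indecomposable, then its minimal projective resolution is
indecomposable as an object of the category of non-negative chain complexes in `C`. -/
theorem indecomposable_minimal_projective_resolution_of_indecomposable
    (C : Type u) [Category.{v} C] [Abelian C] (hC : HasMinimalCovers C)
    (X : C) (hX : Indecomposable X)
    (R : ProjectiveResolution X) (hR : R.IsMinimal) :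
    Indecomposable R.complex :=
  indecomposable_minimal_projective_resolution_of_indecomposable_general C X hX R hR
end

section
/- Let Q be a poset and D ⊆ Q a closed full subposet satisfying: for every x ∈ Q such that the set D≤x := {d ∈ D : d ≤ x} is nonempty, there is a unique s ∈ suplim(D≤x) with s ≤ x. Then the inclusion D ⊆ Q admits a transfer, i.e., the monotone extension to posets with a bottom element adjoined, (D_*) → (Q_*), has a right adjoint. -/
universe u

/-- `suplim U` is the set of minimal elements of the set of upper bounds of `U`. -/
def suplim {Q : Type u} [Preorder Q] (U : Set Q) : Set Q :=
  {s | Minimal (· ∈ upperBounds U) s}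

/-- A subset `D` of a poset is closed if `suplim U ⊆ D` for every nonempty subset `U ⊆ D`. -/
def IsClosedSubposet {Q : Type u} [Preorder Q] (D : Set Q) : Prop :=
  ∀ U : Set Q, U ⊆ D → U.Nonempty → suplim U ⊆ D

/-- A monotone map `α : D → Q` admits a transfer if the extension
`α⁎ : D ∪ {-∞} → Q ∪ {-∞}` (sending `-∞` to `-∞`) has a right adjoint, i.e. there is
`r : Q ∪ {-∞} → D ∪ {-∞}` with `α⁎ d ≤ q ↔ d ≤ r q` for all `d`, `q`. -/
def AdmitsTransfer {D : Type u} {Q : Type u} [Preorder D] [Preorder Q] (α : D → Q) : Prop :=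
  ∃ r : WithBot Q → WithBot D, GaloisConnection (WithBot.map α) r

/-- **Statement 16.** Let `Q` be a poset and `D ⊆ Q` a closed (full) subposet such that, for
every `x ∈ Q` with `{d ∈ D | d ≤ x}` nonempty, there is a unique `s ∈ suplim {d ∈ D | d ≤ x}`
with `s ≤ x`. Then the inclusion `D ⊆ Q` admits a transfer. -/
theorem admitsTransfer_of_unique_suplim {Q : Type u} [PartialOrder Q]
    (D : Set Q) (hD : IsClosedSubposet D)
    (h : ∀ x : Q, ({d : Q | d ∈ D ∧ d ≤ x}).Nonempty →
      ∃! s : Q, s ∈ suplim {d : Q | d ∈ D ∧ d ≤ x} ∧ s ≤ x) :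
    AdmitsTransfer ((Subtype.val) : D → Q) := by

  classical
  refine ⟨fun q => WithBot.recBotCoe ⊥ (fun x =>
    if hx : ({d : Q | d ∈ D ∧ d ≤ x}).Nonempty then
      ((⟨(h x hx).choose, hD _ (fun d hd => hd.1) hx (h x hx).choose_spec.1.1⟩ : D) : WithBot D)
    else ⊥) q, ?_⟩
  intro a b
  induction b using WithBot.recBotCoe with
  | bot =>
    simp only [WithBot.recBotCoe]
    constructor
    · intro hab
      induction a using WithBot.recBotCoe with
      | bot => exact le_refl _
      | coe d => exact absurd hab (by simp)
    · intro hab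
      induction a using WithBot.recBotCoe with
      | bot => simp
      | coe d => exact absurd hab (by simp)
  | coe x =>
    induction a using WithBot.recBotCoe with
    | bot => simp
    | coe d =>
      simp only [WithBot.recBotCoe, WithBot.map_coe, WithBot.coe_le_coe]
      by_cases hx : ({d : Q | d ∈ D ∧ d ≤ x}).Nonempty
      · rw [dif_pos hx]
        obtain ⟨⟨hsup, hsx⟩, -⟩ := (h x hx).choose_spec
        constructor
        · intro hdx
          exact WithBot.coe_le_coe.mpr (Subtype.coe_le_coe.mp
            (hsup.prop (show (d : Q) ∈ {d : Q | d ∈ D ∧ d ≤ x} from ⟨d.2, hdx⟩)))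
        · intro hds
          exact le_trans (Subtype.coe_le_coe.mpr (WithBot.coe_le_coe.mp hds)) hsx
      · rw [dif_neg hx]
        constructor
        · intro hdx; exact absurd ⟨(d : Q), d.2, hdx⟩ hx
        · intro hds; exact absurd hds (by simp)
end

section
/- Let C be an abelian category, B a finite poset, and A ⊆ B a subposet. Let X : B → C be a functor and let β : Lan_i(X|_A) → X be the canonical morphism adjoint to the identity, where Lan_i denotes left Kan extension along the inclusion i : A ⊆ B. Then Hom(coker β, X) = 0 if, and only if, the restriction homomorphism End(X) → End(X|_A) is injective. -/
open CategoryTheory CategoryTheory.Limits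

universe v u

/-- The inclusion functor of a full subposet `A ⊆ B` into `B`. -/
def subposetIncl {B : Type} [PartialOrder B] (A : Set B) : A ⥤ B :=
  Monotone.functor (fun _ _ h => h : Monotone (Subtype.val : A → B))

/-! Since `η ≫ i^*β = 𝟙`, the universal property of the Kan extension shows that `β ≫ φ` is
determined by the restriction `i^*φ`; in particular `φ : X ⟶ X` kills `β` exactly when its
restriction to `A` vanishes. Maps `coker β ⟶ X` are the maps `X ⟶ X` killing `β`, so they all
vanish iff the additive map `φ ↦ i^*φ` has trivial kernel. -/

namespace CategoryTheory

section KanExtension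

variable {A B H : Type*} [Category A] [Category B] [Category H] {i : A ⥤ B} {X L : B ⥤ H}
  (η : i ⋙ X ⟶ i ⋙ L) [L.IsLeftKanExtension η]

lemma Functor.unit_comp_whiskerLeft_descOfIsLeftKanExtension_id_comp {G : B ⥤ H} (φ : X ⟶ G) :
    η ≫ Functor.whiskerLeft i (L.descOfIsLeftKanExtension η X (𝟙 (i ⋙ X)) ≫ φ) =
      Functor.whiskerLeft i φ := by
  rw [Functor.whiskerLeft_comp, Functor.descOfIsLeftKanExtension_fac_assoc, Category.id_comp]

lemma Functor.descOfIsLeftKanExtension_id_comp_eq_iff {G : B ⥤ H} (φ ψ : X ⟶ G) :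
    L.descOfIsLeftKanExtension η X (𝟙 (i ⋙ X)) ≫ φ =
        L.descOfIsLeftKanExtension η X (𝟙 (i ⋙ X)) ≫ ψ ↔
      Functor.whiskerLeft i φ = Functor.whiskerLeft i ψ := by
  rw [← (L.homEquivOfIsLeftKanExtension η G).apply_eq_iff_eq]
  exact iff_of_eq (congrArg₂ _
    (Functor.unit_comp_whiskerLeft_descOfIsLeftKanExtension_id_comp η φ)
    (Functor.unit_comp_whiskerLeft_descOfIsLeftKanExtension_id_comp η ψ))

end KanExtension

lemma Limits.cokernel_hom_eq_zero_iff {C : Type*} [Category C] [HasZeroMorphisms C] {X Y Z : C}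
    (f : X ⟶ Y) [HasCokernel f] :
    (∀ φ : cokernel f ⟶ Z, φ = 0) ↔ ∀ g : Y ⟶ Z, f ≫ g = 0 → g = 0 := by
  constructor
  · intro h g hg
    rw [← cokernel.π_desc f g hg, h (cokernel.desc f g hg), comp_zero]
  · intro h φ
    rw [← cancel_epi (cokernel.π f), comp_zero]
    exact h _ (by rw [cokernel.condition_assoc, zero_comp])

end CategoryTheory

theorem hom_cokernel_eq_zero_iff_restriction_injective_general
    (C : Type u) [Category.{v} C] [Abelian C]
    {B : Type} [PartialOrder B] (A : Set B)
    (X : B ⥤ C) (L : B ⥤ C)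
    (η : (subposetIncl A ⋙ X) ⟶ subposetIncl A ⋙ L)
    [L.IsLeftKanExtension η] :
    (∀ φ : cokernel (L.descOfIsLeftKanExtension η X (𝟙 (subposetIncl A ⋙ X))) ⟶ X,
        φ = 0) ↔
      Function.Injective
        (fun φ : X ⟶ X => Functor.whiskerLeft (subposetIncl A) φ) := by
  rw [cokernel_hom_eq_zero_iff]
  refine Iff.trans (forall_congr' fun φ => ?_)
    (injective_iff_map_eq_zero ((Functor.whiskeringLeft _ _ C).obj (subposetIncl A)).mapAddHom).symm
  have h := Functor.descOfIsLeftKanExtension_id_comp_eq_iff η φ 0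
  rw [comp_zero] at h
  rw [h]
  rfl

/-- **Statement 19.** Let `C` be abelian, `B` a finite poset, `A ⊆ B` a subposet, and
`X : B ⥤ C`.  Let `L` be a left Kan extension of the restriction `X|_A` along the inclusion
`i : A ⊆ B`, with unit `η`, and let `β : L ⟶ X` be the canonical morphism adjoint to the
identity of `X|_A`.  Then `Hom(coker β, X) = 0` if, and only if, the restriction homomorphism
`End(X) → End(X|_A)` is injective. -/
theorem hom_cokernel_eq_zero_iff_restriction_injective
    (C : Type u) [Category.{v} C] [Abelian C]
    {B : Type} [PartialOrder B] [Fintype B] (A : Set B)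
    (X : B ⥤ C) (L : B ⥤ C)
    (η : (subposetIncl A ⋙ X) ⟶ subposetIncl A ⋙ L)
    [L.IsLeftKanExtension η] :
    (∀ φ : cokernel (L.descOfIsLeftKanExtension η X (𝟙 (subposetIncl A ⋙ X))) ⟶ X,
        φ = 0) ↔
      Function.Injective
        (fun φ : X ⟶ X => Functor.whiskerLeft (subposetIncl A) φ) :=
  hom_cokernel_eq_zero_iff_restriction_injective_general C A X L η
end
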